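/- Shifting Ŵ on the x parameter with error terms: Let Ψ : ℝ → ℝ be convex, Γ > 0, Ŵ(g, x) = −min_d { g·d + Γd²/2 + Ψ(x + d) − Ψ(x) }. Let x_a, x_b ∈ ℝ with δ = x_b − x_a, let g^a ∈ ℝ, and suppose x_b = x' + d₂ where d₂ = d̂(g^b, x') is the proximal step at some point x' with gradient value g^b. Then: Ŵ(g^a, x_a) ≥ Ŵ(g^a, x_b) − (3/(2Γ))·(g^b − g^a)² − 2Γ·δ² − (3Γ/2)·(d₂)². -/

import Mathlib

/-!
Optimality of `d̂(g, x)` makes `-(g + Γ d̂(g, x))` a subgradient of `Ψ` at `x + d̂(g, x)`.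
Testing the minimisation defining `Ŵ(g_a, x_a)` with the step that lands at `x_b + e`,
`e = d̂(g_a, x_b)`, and bounding `Ψ x_a` below by the subgradient `-(g_b + Γ d₂)` at `x_b`, gives
`Ŵ(g_a, x_a) - Ŵ(g_a, x_b) ≥ (u - Γ e) δ - Γ δ² / 2` with `u = g_b - g_a + Γ d₂`.
Monotonicity of subgradients (at `x_b` and `x_b + e`) puts `Γ e` between `0` and `u`,
so `|u - Γ e| ≤ |u|`, and AM–GM finishes.
-/

open Filter Topology Set

noncomputable def proxObjective (Ψ : ℝ → ℝ) (Γ g x d : ℝ) : ℝ :=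
  g * d + Γ * d ^ 2 / 2 + Ψ (x + d) - Ψ x

def HasSubgradientAt (Ψ : ℝ → ℝ) (s p : ℝ) : Prop :=
  ∀ y, Ψ p + s * (y - p) ≤ Ψ y

theorem le_of_forall_mem_Ioc_le_add_mul {a b c : ℝ} (h : ∀ t ∈ Ioc (0 : ℝ) 1, a ≤ b + t * c) :
    a ≤ b := by
  have hlim : Tendsto (fun t : ℝ => b + t * c) (𝓝[>] 0) (𝓝 b) :=
    (Continuous.tendsto' (by fun_prop) 0 b (by simp)).mono_left nhdsWithin_le_nhds
  exact ge_of_tendsto hlim (by filter_upwards [Ioc_mem_nhdsGT zero_lt_one] with t ht using h t ht)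

theorem HasSubgradientAt.of_proxObjective_min {Ψ : ℝ → ℝ} (hΨ : ConvexOn ℝ univ Ψ)
    {Γ g x d₀ : ℝ} (hmin : ∀ d, proxObjective Ψ Γ g x d₀ ≤ proxObjective Ψ Γ g x d) :
    HasSubgradientAt Ψ (-(g + Γ * d₀)) (x + d₀) := by
  intro y
  set p := x + d₀
  refine le_of_forall_mem_Ioc_le_add_mul (c := Γ * (y - p) ^ 2 / 2) fun t ⟨ht₀, ht₁⟩ => ?_
  have hconv := hΨ.2 (mem_univ p) (mem_univ y) (sub_nonneg.2 ht₁) ht₀.le (sub_add_cancel 1 t)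
  have hopt := hmin (d₀ + t * (y - p))
  have hpt : (1 - t) • p + t • y = x + (d₀ + t * (y - p)) := by
    simp only [smul_eq_mul, p]; ring
  rw [hpt] at hconv
  simp only [smul_eq_mul] at hconv
  unfold proxObjective at hopt
  have hscaled :
      t * (Ψ p + -(g + Γ * d₀) * (y - p)) ≤ t * (Ψ y + t * (Γ * (y - p) ^ 2 / 2)) := by
    linarith
  exact le_of_mul_le_mul_left hscaled ht₀

theorem HasSubgradientAt.monotone {Ψ : ℝ → ℝ} {s t p q : ℝ} (hp : HasSubgradientAt Ψ s p)
    (hq : HasSubgradientAt Ψ t q) : 0 ≤ (s - t) * (p - q) := by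
  linarith [hp q, hq p]

theorem proxObjective_sub_ge_of_hasSubgradientAt {Ψ : ℝ → ℝ} {Γ g s xa xb da : ℝ}
    (hmin : ∀ d, proxObjective Ψ Γ g xa da ≤ proxObjective Ψ Γ g xa d)
    (hs : HasSubgradientAt Ψ s xb) (db : ℝ) :
    (-s - g - Γ * db) * (xb - xa) - Γ * (xb - xa) ^ 2 / 2
      ≤ proxObjective Ψ Γ g xb db - proxObjective Ψ Γ g xa da := by
  have hopt := hmin (db + (xb - xa))
  have hsub := hs xa
  unfold proxObjective at *
  rw [show xa + (db + (xb - xa)) = xb + db by ring] at hopt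
  linarith

theorem shift_error_le {Γ a d e : ℝ} (hΓ : 0 < Γ) (he : 0 ≤ (a + Γ * d - Γ * e) * e) (δ : ℝ) :
    -(3 / (2 * Γ) * a ^ 2) - 2 * Γ * δ ^ 2 - 3 * Γ / 2 * d ^ 2
      ≤ (a + Γ * d - Γ * e) * δ - Γ * δ ^ 2 / 2 := by
  set w := a + Γ * d - Γ * e
  have hw : w ^ 2 ≤ (a + Γ * d) ^ 2 := by nlinarith [mul_nonneg hΓ.le he, sq_nonneg (Γ * e)]
  have key : 0 ≤ 2 * Γ * w * δ + 3 * Γ ^ 2 * δ ^ 2 + 3 * a ^ 2 + 3 * Γ ^ 2 * d ^ 2 := by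
    nlinarith [sq_nonneg (w + Γ * δ), sq_nonneg (a - Γ * d)]
  have heq : w * δ - Γ * δ ^ 2 / 2 - (-(3 / (2 * Γ) * a ^ 2) - 2 * Γ * δ ^ 2 - 3 * Γ / 2 * d ^ 2)
      = (2 * Γ * w * δ + 3 * Γ ^ 2 * δ ^ 2 + 3 * a ^ 2 + 3 * Γ ^ 2 * d ^ 2) / (2 * Γ) := by
    field_simp; ring
  linarith [div_nonneg key (by positivity : (0:ℝ) ≤ 2 * Γ)]

/-- Key shifting inequality for `Ŵ` on the `x` parameter with error terms:
if `x_b = x' + d₂` where `d₂ = d̂(g_b, x')` is a proximal step, then with `δ = x_b − x_a`,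
`Ŵ(g_a, x_a) ≥ Ŵ(g_a, x_b) − (3/(2Γ))(g_b − g_a)² − 2Γ δ² − (3Γ/2) d₂²`. -/
theorem What_key_shift
    (Ψ : ℝ → ℝ) (hΨ : ConvexOn ℝ Set.univ Ψ) (Γ : ℝ) (hΓ : 0 < Γ)
    (dhat : ℝ → ℝ → ℝ)
    (hdhat : ∀ g x d : ℝ,
      g * dhat g x + Γ * (dhat g x) ^ 2 / 2 + Ψ (x + dhat g x) - Ψ x
        ≤ g * d + Γ * d ^ 2 / 2 + Ψ (x + d) - Ψ x)
    (ga gb xa xb x' : ℝ) (hxb : xb = x' + dhat gb x') :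
    -(ga * dhat ga xa + Γ * (dhat ga xa) ^ 2 / 2 + Ψ (xa + dhat ga xa) - Ψ xa)
      ≥ -(ga * dhat ga xb + Γ * (dhat ga xb) ^ 2 / 2 + Ψ (xb + dhat ga xb) - Ψ xb)
        - 3 / (2 * Γ) * (gb - ga) ^ 2 - 2 * Γ * (xb - xa) ^ 2
        - 3 * Γ / 2 * (dhat gb x') ^ 2 := by
  have hmin : ∀ g x d, proxObjective Ψ Γ g x (dhat g x) ≤ proxObjective Ψ Γ g x d := hdhat
  have hsub_b : HasSubgradientAt Ψ (-(gb + Γ * dhat gb x')) xb :=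
    hxb ▸ HasSubgradientAt.of_proxObjective_min hΨ (hmin gb x')
  have hsub_ab := HasSubgradientAt.of_proxObjective_min hΨ (hmin ga xb)
  have hmono := hsub_ab.monotone hsub_b
  have hshift := proxObjective_sub_ge_of_hasSubgradientAt (hmin ga xa) hsub_b (dhat ga xb)
  have herr := shift_error_le (a := gb - ga) (d := dhat gb x') (e := dhat ga xb) hΓ
    (by linarith) (xb - xa)
  unfold proxObjective at hshift
  linarith
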